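/- arXiv:2512.10154 — 2 statements merged into one kernel-verified Lean document; each statement's English description precedes it below -/
import Mathlib

section
/- The structures (ℕ,<) and (ℤ,<) admit no dimension function: 𝔫_dim((ℕ,<)) = 𝔫_dim((ℤ,<)) = 0. -/
open FirstOrder FirstOrder.Language Set

universe u v w

namespace PaperDim

section Core

variable (L : FirstOrder.Language.{v, w}) (M : Type u) [L.Structure M]

/-- The collection of definable subsets of `M^n` (definable with parameters from `M`). -/
abbrev DefSet (n : ℕ) : Type u :=
  {X : Set (Fin n → M) // Set.Definable (Set.univ : Set M) L X}

variable {L M}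

/-- A definable subset of `M^1` viewed as a subset of `M`. -/
def asSet1 (X : Set (Fin 1 → M)) : Set M := {a : M | (fun _ => a) ∈ X}

/-- The fiber of `X ⊆ M^{n+1}` over `x ∈ M^n`, as a subset of `M^1`. -/
def fiber {n : ℕ} (X : Set (Fin (n + 1) → M)) (x : Fin n → M) : Set (Fin 1 → M) :=
  {y | Fin.snoc x (y 0) ∈ X}

/-- Condition (1) of a dimension function: `dim ∅ = -∞`, `dim {a} = 0`, `dim M = 1`.
Here `d k` is the value of the dimension function on definable subsets of `M^{k+1}`. -/
def Cond1 (d : ∀ n : ℕ, DefSet L M (n + 1) → WithBot ℕ) : Prop :=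
  (∀ X : DefSet L M 1, X.1 = ∅ → d 0 X = ⊥) ∧
  (∀ (X : DefSet L M 1) (a : M), X.1 = ({fun _ => a} : Set (Fin 1 → M)) → d 0 X = 0) ∧
  (∀ X : DefSet L M 1, X.1 = (Set.univ : Set (Fin 1 → M)) → d 0 X = 1)

/-- Condition (2)ₙ (at arity `n + 1`): `dim (X ∪ Y) = max (dim X) (dim Y)`. -/
def Cond2 (d : ∀ n : ℕ, DefSet L M (n + 1) → WithBot ℕ) (n : ℕ) : Prop :=
  ∀ X Y Z : DefSet L M (n + 1), Z.1 = X.1 ∪ Y.1 → d n Z = max (d n X) (d n Y)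

/-- Condition (3)ₙ (at arity `n + 1`): invariance under coordinate permutations. -/
def Cond3 (d : ∀ n : ℕ, DefSet L M (n + 1) → WithBot ℕ) (n : ℕ) : Prop :=
  ∀ (σ : Equiv.Perm (Fin (n + 1))) (X Y : DefSet L M (n + 1)),
    Y.1 = {y : Fin (n + 1) → M | y ∘ σ ∈ X.1} → d n Y = d n X

/-- Condition (3'): invariance under switching the two coordinates, at arity 2. -/
def Cond3' (d : ∀ n : ℕ, DefSet L M (n + 1) → WithBot ℕ) : Prop :=
  ∀ X Y : DefSet L M 2, Y.1 = {v : Fin 2 → M | ![v 1, v 0] ∈ X.1} → d 1 Y = d 1 X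

/-- Condition (4)ₙ, the addition property (at arity `n + 2`):
the set `X(i)` of points over which the fiber of `X` has dimension `i` is definable, and
`dim (X ∩ Π⁻¹(X(i))) = dim X(i) + i`. -/
def Cond4 (d : ∀ n : ℕ, DefSet L M (n + 1) → WithBot ℕ) (n : ℕ) : Prop :=
  ∀ (X : DefSet L M (n + 2)) (i : Fin 2),
    ∃ (Xi : DefSet L M (n + 1)) (W : DefSet L M (n + 2)),
      Xi.1 = {x : Fin (n + 1) → M |
        ∃ hf : Set.Definable (Set.univ : Set M) L (fiber X.1 x),
          d 0 ⟨fiber X.1 x, hf⟩ = ((i : ℕ) : WithBot ℕ)} ∧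
      W.1 = X.1 ∩ (fun z : Fin (n + 2) → M => z ∘ Fin.castSucc) ⁻¹' Xi.1 ∧
      d (n + 1) W = d n Xi + ((i : ℕ) : WithBot ℕ)

/-- A dimension function on the structure `M` (van den Dries). -/
def IsDimFun (d : ∀ n : ℕ, DefSet L M (n + 1) → WithBot ℕ) : Prop :=
  Cond1 d ∧ (∀ n, Cond2 d n) ∧ (∀ n, Cond3 d n) ∧ (∀ n, Cond4 d n)

/-- A weak dimension function: conditions (1), (2)₁, (3') and (4)ₙ for all `n > 1`. -/
def IsWeakDimFun (d : ∀ n : ℕ, DefSet L M (n + 1) → WithBot ℕ) : Prop :=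
  Cond1 d ∧ Cond2 d 0 ∧ Cond3' d ∧ (∀ n, Cond4 d n)

variable (L M)

/-- The set `DIM(M)` of dimension functions on `M`. -/
def DimFuns : Set (∀ n : ℕ, DefSet L M (n + 1) → WithBot ℕ) := {d | IsDimFun d}

/-- `𝔫_dim(M)`: the cardinality of the set of dimension functions on `M`. -/
noncomputable def nDim : Cardinal := Cardinal.mk (DimFuns L M)

/-- The order `<` is definable in the structure. -/
def LtDefinable [LT M] : Prop :=
  Set.Definable (Set.univ : Set M) L {v : Fin 2 → M | v 0 < v 1}

/-- The graph of addition is definable in the structure. -/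
def AddDefinable [Add M] : Prop :=
  Set.Definable (Set.univ : Set M) L {v : Fin 3 → M | v 0 + v 1 = v 2}

/-- The graph of multiplication is definable in the structure. -/
def MulDefinable [Mul M] : Prop :=
  Set.Definable (Set.univ : Set M) L {v : Fin 3 → M | v 0 * v 1 = v 2}

end Core

/-- The order topology on a linear order, generated by open rays. -/
def orderTop (α : Type*) [LinearOrder α] : TopologicalSpace α :=
  TopologicalSpace.generateFrom {s : Set α | (∃ a, s = Set.Ioi a) ∨ (∃ a, s = Set.Iio a)}

/-- A set is discrete (w.r.t. a topology `t`) if all of its points are isolated in it. -/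
def DiscreteIn {α : Type*} (t : TopologicalSpace α) (D : Set α) : Prop :=
  ∀ x ∈ D, ∃ U : Set α, t.IsOpen U ∧ U ∩ D = {x}

/-- An open interval: a nonempty set of the form `(a, b)` with `a, b ∈ M ∪ {±∞}`. -/
def IsOpenInterval {α : Type*} [Preorder α] (S : Set α) : Prop :=
  S.Nonempty ∧ ((∃ a b, S = Set.Ioo a b) ∨ (∃ a, S = Set.Ioi a) ∨
    (∃ b, S = Set.Iio b) ∨ S = Set.univ)

section Ord

variable (L : FirstOrder.Language.{v, w}) (M : Type u) [L.Structure M]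

/-- O-minimality: every definable subset of `M` is a union of a finite set and finitely many
open intervals. -/
def OMinimal [LinearOrder M] : Prop :=
  ∀ X : DefSet L M 1, ∃ (F : Set M) (k : ℕ) (C : Fin k → Set M),
    F.Finite ∧ (∀ i, IsOpenInterval (C i)) ∧ asSet1 X.1 = F ∪ ⋃ i, C i

/-- Weak o-minimality: every definable subset of `M` is a union of finitely many convex sets. -/
def WeaklyOMinimal [LinearOrder M] : Prop :=
  ∀ X : DefSet L M 1, ∃ (k : ℕ) (C : Fin k → Set M),
    (∀ i, (C i).OrdConnected) ∧ asSet1 X.1 = ⋃ i, C i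

/-- Definable completeness: every definable subset of `M` has a supremum and an infimum in
`M ∪ {±∞}`. -/
def DefinablyComplete [LinearOrder M] : Prop :=
  ∀ X : DefSet L M 1,
    ((asSet1 X.1).Nonempty → BddAbove (asSet1 X.1) → ∃ a, IsLUB (asSet1 X.1) a) ∧
    ((asSet1 X.1).Nonempty → BddBelow (asSet1 X.1) → ∃ a, IsGLB (asSet1 X.1) a)

/-- d-minimality: the structure is definably complete and in every elementarily equivalent
structure, every definable subset of the universe is a union of an open set and finitely many
discrete sets. The linear order is assumed to be the interpretation of the relation symbol `lt`. -/
def DMinimal [LinearOrder M] (lt : L.Relations 2) : Prop :=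
  DefinablyComplete L M ∧
  ∀ (N : Type u) [L.Structure N] [LinearOrder N],
    (∀ a b : N, Structure.RelMap lt ![a, b] ↔ a < b) →
    L.ElementarilyEquivalent M N →
    ∀ X : DefSet L N 1,
      ∃ (U : Set N) (k : ℕ) (D : Fin k → Set N),
        (orderTop N).IsOpen U ∧ (∀ i, DiscreteIn (orderTop N) (D i)) ∧
        asSet1 X.1 = U ∪ ⋃ i, D i

end Ord

open scoped Classical in
/-- The topological dimension of a definable set: the largest `d` such that the image of the
set under some coordinate projection `M^n → M^d` has nonempty interior (w.r.t. the order
topology and the corresponding product topologies). -/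
noncomputable def dimTop {M : Type u} [LinearOrder M] {n : ℕ} (X : Set (Fin n → M)) :
    WithBot ℕ :=
  if X = ∅ then ⊥
  else
    ↑(sSup {d : ℕ | ∃ f : Fin d → Fin n, Function.Injective f ∧
      (@interior (Fin d → M) (@Pi.topologicalSpace (Fin d) (fun _ => M) (fun _ => orderTop M))
        ((fun x : Fin n → M => x ∘ f) '' X)).Nonempty})


/-! ### Extra notions -/

/-- `G ⊆ M²` is the graph of a bijection from `A` onto `B`. -/
def IsDefBijectionGraph {M : Type u} (G : Set (Fin 2 → M)) (A B : Set M) : Prop :=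
  (∀ v ∈ G, v 0 ∈ A ∧ v 1 ∈ B) ∧
  (∀ x ∈ A, ∃! y : M, (![x, y] : Fin 2 → M) ∈ G) ∧
  (∀ y ∈ B, ∃! x : M, (![x, y] : Fin 2 → M) ∈ G)

section Extra

variable (L : FirstOrder.Language.{v, w}) (M : Type u) [L.Structure M]

/-- A definable set `I ⊆ M` is self-sufficient if it is infinite and there is no definable
bijection between an infinite definable subset of `I` and an infinite definable subset of
`M ∖ I`. -/
def SelfSufficient (I : Set M) : Prop :=
  I.Infinite ∧
  ∀ J₁ J₂ : DefSet L M 1, asSet1 J₁.1 ⊆ I → asSet1 J₂.1 ⊆ Iᶜ →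
    (asSet1 J₁.1).Infinite → (asSet1 J₂.1).Infinite →
    ¬ ∃ G : DefSet L M 2, IsDefBijectionGraph G.1 (asSet1 J₁.1) (asSet1 J₂.1)

/-- A self-sufficient set is minimally self-sufficient if every self-sufficient set either
meets it in a finite set or contains it up to a finite set. -/
def MinimallySelfSufficient (I : Set M) : Prop :=
  SelfSufficient L M I ∧
  ∀ X : DefSet L M 1, SelfSufficient L M (asSet1 X.1) →
    (I ∩ asSet1 X.1).Finite ∨ ∃ F : Set M, F.Finite ∧ I ⊆ asSet1 X.1 ∪ F

end Extra

/-- `I₁ ∼_fin I₂`: the symmetric difference is finite. -/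
def FinSymmDiff {M : Type u} (A B : Set M) : Prop := ((A \ B) ∪ (B \ A)).Finite

/-- `I⟨τ⟩`: the product of copies of `I` (where `τ i = false`) and `M ∖ I`
(where `τ i = true`). -/
def Itau {M : Type u} (I : Set M) {n : ℕ} (τ : Fin n → Bool) : Set (Fin n → M) :=
  {v | ∀ i, if τ i then v i ∉ I else v i ∈ I}

open scoped Classical in
/-- The value of `Dim[I]` on a (nonempty) definable set contained in `I⟨τ⟩`. -/
noncomputable def DimIPiece {M : Type u} [LinearOrder M] (I : Set M) :
    (n : ℕ) → (Fin (n + 1) → Bool) → Set (Fin (n + 1) → M) → WithBot ℕ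
  | 0, τ, X =>
    if X = ∅ then ⊥ else if τ 0 then 0 else dimTop X
  | n + 1, τ, X =>
    if X = ∅ then ⊥
    else if τ (Fin.last (n + 1)) then
      DimIPiece I n (fun i => τ i.castSucc)
        ((fun v : Fin (n + 2) → M => v ∘ Fin.castSucc) '' X)
    else
      max (dimTop {x : Fin (n + 1) → M |
              (∃ v ∈ X, v ∘ Fin.castSucc = x) ∧ dimTop (fiber X x) ≠ 1})
        (dimTop {x : Fin (n + 1) → M | dimTop (fiber X x) = 1} + 1)

/-- The function `Dim[I]` associated with a subset `I` of `M` (the input dimension being the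
topological dimension). -/
noncomputable def DimI {M : Type u} [LinearOrder M] (I : Set M) (n : ℕ)
    (X : Set (Fin (n + 1) → M)) : WithBot ℕ :=
  Finset.univ.sup fun τ : Fin (n + 1) → Bool => DimIPiece I n τ (X ∩ Itau I τ)

section Morley

variable (L : FirstOrder.Language.{v, w}) (M : Type u) [L.Structure M]

/-- The model-theoretic algebraic closure of a set of parameters `A`. -/
def aclS (A : Set M) : Set M :=
  {a : M | ∃ s : Set (Fin 1 → M), Set.Definable A L s ∧ s.Finite ∧ (fun _ => a) ∈ s}

open scoped Classical in
/-- The rank `rk^acl(X/A)`: the largest cardinality of a subset of the coordinates of a point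
of `X` that is `acl`-independent over `A` (and `-∞` for `X = ∅`). -/
noncomputable def rkOver {n : ℕ} (A : Set M) (X : Set (Fin n → M)) : WithBot ℕ :=
  if X = ∅ then ⊥
  else
    ↑(sSup {k : ℕ | ∃ x ∈ X, ∃ S : Finset (Fin n), S.card = k ∧
        ∀ i ∈ S, x i ∉ aclS L M (A ∪ x '' {j : Fin n | j ∈ S ∧ j ≠ i})})

/-- A structure is minimal if every definable subset of the universe is finite or cofinite. -/
def MinimalStr : Prop :=
  ∀ X : DefSet L M 1, (asSet1 X.1).Finite ∨ ((asSet1 X.1)ᶜ : Set M).Finite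

/-- A structure is strongly minimal if every elementarily equivalent structure is minimal. -/
def StronglyMinimal : Prop :=
  MinimalStr L M ∧
  ∀ (N : Type u) [L.Structure N], L.ElementarilyEquivalent M N → MinimalStr L N

end Morley

section Theories

/-- A divisible Abelian group structure on a subset `S`, with addition `f`. -/
def DivAbGroupOn {α : Type*} (f : α → α → α) (S : Set α) : Prop :=
  (∀ x ∈ S, ∀ y ∈ S, f x y ∈ S) ∧
  (∀ x ∈ S, ∀ y ∈ S, f x y = f y x) ∧
  (∀ x ∈ S, ∀ y ∈ S, ∀ z ∈ S, f (f x y) z = f x (f y z)) ∧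
  (∃ e ∈ S, (∀ x ∈ S, f e x = x) ∧ (∀ x ∈ S, ∃ y ∈ S, f x y = e)) ∧
  (∀ k : ℕ, 0 < k → ∀ x ∈ S, ∃ y ∈ S, (f y)^[k - 1] y = x)

/-- Embedding of `M` into `M ∪ {±∞}`. -/
def emb {α : Type*} (x : α) : WithBot (WithTop α) := ((x : WithTop α) : WithBot (WithTop α))

/-- `M` is a model of the theory `T_m` of Proposition 3.17: a DLO with constants
`c_1 < ⋯ < c_{m-1}` (recorded here by the boundary sequence
`⊥ = c 0 < c 1 < ⋯ < c m = ⊤` in `M ∪ {±∞}`), such that `+` restricts to a divisible Abelian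
group on each interval `(c_{i-1}, c_i)` and is constantly `c_1` off the union of the
`(c_{i-1}, c_i)²`. -/
def ModelTm (m : ℕ) (hm : 0 < m) (L : FirstOrder.Language.{v, w}) (M : Type u)
    [L.Structure M] [LinearOrder M]
    (lt : L.Relations 2) (plus : L.Functions 2)
    (c : Fin (m + 1) → WithBot (WithTop M)) : Prop :=
  DenselyOrdered M ∧ NoMinOrder M ∧ NoMaxOrder M ∧ Nonempty M ∧
  (∀ x y : M, Structure.RelMap lt ![x, y] ↔ x < y) ∧
  c 0 = ⊥ ∧ c (Fin.last m) = ⊤ ∧ StrictMono c ∧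
  (∀ i : Fin (m + 1), i ≠ 0 → i ≠ Fin.last m → ∃ x : M, c i = emb x) ∧
  (∀ i : Fin m,
    DivAbGroupOn (fun x y : M => Structure.funMap plus ![x, y])
      {x : M | c i.castSucc < emb x ∧ emb x < c i.succ}) ∧
  (∀ x y : M,
    (¬ ∃ i : Fin m, (c i.castSucc < emb x ∧ emb x < c i.succ) ∧
        (c i.castSucc < emb y ∧ emb y < c i.succ)) →
    ∀ z : M, c ⟨1, by omega⟩ = emb z → Structure.funMap plus ![x, y] = z)

/-- The set of realizations of a unary predicate. -/
def relSet (L : FirstOrder.Language.{v, w}) (M : Type u) [L.Structure M]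
    (r : L.Relations 1) : Set M :=
  {x : M | Structure.RelMap r ![x]}

/-- `M` is a model of the theory `T_m` of Theorem 3.18: an ordered divisible Abelian group
with a strictly increasing chain of nontrivial proper convex subgroups `U_1 ⊊ ⋯ ⊊ U_m ⊊ M`. -/
def ModelTw (m : ℕ) (L : FirstOrder.Language.{v, w}) (M : Type u)
    [L.Structure M] [AddCommGroup M] [LinearOrder M] [IsOrderedAddMonoid M]
    (lt : L.Relations 2) (plus : L.Functions 2) (U : Fin m → L.Relations 1) : Prop :=
  (∀ x y : M, Structure.RelMap lt ![x, y] ↔ x < y) ∧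
  (∀ x y : M, Structure.funMap plus ![x, y] = x + y) ∧
  (∀ k : ℕ, 0 < k → ∀ x : M, ∃ y : M, k • y = x) ∧
  (∀ i : Fin m,
    (0 : M) ∈ relSet L M (U i) ∧
    (∀ x ∈ relSet L M (U i), ∀ y ∈ relSet L M (U i), x + y ∈ relSet L M (U i)) ∧
    (∀ x ∈ relSet L M (U i), -x ∈ relSet L M (U i)) ∧
    (relSet L M (U i)).OrdConnected ∧
    relSet L M (U i) ≠ {0} ∧ relSet L M (U i) ≠ Set.univ) ∧
  (∀ i j : Fin m, i < j → relSet L M (U i) ⊂ relSet L M (U j))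

end Theories


/-!
The relation `b < a` on `ℕ` has finite fibres, so by the addition property its graph has
dimension at most `1`; the transposed relation has cofinite, hence `1`-dimensional, fibres over
all of `ℕ`, so its graph has dimension `2`, contradicting permutation invariance.

In `ℤ` the successor map is a definable bijection from `(c, ∞)` onto `(c + 1, ∞)`, so all rays
`(c, ∞)` have the same dimension, and likewise all rays `(-∞, c)`. Since `ℤ` is the union of
`(-∞, 0)`, `{0}` and `(0, ∞)`, one kind of ray has dimension `1`, and the argument for `ℕ` runs
on `(0, ∞)`, or on `(-∞, 0)` with the order reversed.
-/

section Definability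

variable {L : FirstOrder.Language.{v, w}} {M : Type u} [L.Structure M]

lemma fin_one_eta (x : Fin 1 → M) : (fun _ => x 0) = x :=
  funext fun i => by rw [Subsingleton.elim i 0]

lemma mem_asSet1 {X : Set (Fin 1 → M)} {a : M} : a ∈ asSet1 X ↔ (fun _ => a) ∈ X := Iff.rfl

@[simp]
lemma apply_zero_mem_asSet1 {X : Set (Fin 1 → M)} {x : Fin 1 → M} : x 0 ∈ asSet1 X ↔ x ∈ X := by
  rw [mem_asSet1, fin_one_eta]

lemma finite_setOf_apply_zero_mem {t : Set M} (ht : t.Finite) :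
    {y : Fin 1 → M | y 0 ∈ t}.Finite :=
  ht.preimage fun y _ z _ h => by rw [← fin_one_eta y, ← fin_one_eta z, h]

@[simp]
lemma mem_fiber_two {X : Set (Fin 2 → M)} {x y : Fin 1 → M} :
    y ∈ fiber X x ↔ ![x 0, y 0] ∈ X := by
  have : (Fin.snoc x (y 0) : Fin 2 → M) = ![x 0, y 0] := by ext i; fin_cases i <;> rfl
  rw [fiber, Set.mem_ofPred_eq, this]

lemma definable_fiber {n : ℕ} {X : Set (Fin (n + 1) → M)}
    (hX : (univ : Set M).Definable L X) (x : Fin n → M) :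
    (univ : Set M).Definable L (fiber X x) := by
  refine hX.preimage_map (F := fun y => Fin.snoc x (y 0)) fun i => ?_
  induction i using Fin.lastCases with
  | last => simpa using DefinableFun.proj (L := L) (A := univ) (i := (0 : Fin 1))
  | cast j => simpa using L.definableFun_const (Fin 1) (mem_univ (x j))

lemma nonempty_fiber_of_mem {n : ℕ} {X : Set (Fin (n + 1) → M)} {v : Fin (n + 1) → M}
    (hv : v ∈ X) : (fiber X (v ∘ Fin.castSucc)).Nonempty :=
  ⟨fun _ => v (Fin.last n), by
    rw [fiber, Set.mem_ofPred_eq]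
    exact (Fin.snoc_init_self v).symm ▸ hv⟩

namespace DefSet

lemma ext_asSet1 {X Y : DefSet L M 1} (h : asSet1 X.1 = asSet1 Y.1) : X = Y :=
  Subtype.ext (Set.ext fun x => by rw [← apply_zero_mem_asSet1, h, apply_zero_mem_asSet1])

lemma definable_apply_mem {α : Type*} (S : DefSet L M 1) (j : α) :
    (univ : Set M).Definable L {v : α → M | v j ∈ asSet1 S.1} :=
  S.2.preimage_comp fun _ => j

def fiber {n : ℕ} (X : DefSet L M (n + 1)) (x : Fin n → M) : DefSet L M 1 :=
  ⟨PaperDim.fiber X.1 x, definable_fiber X.2 x⟩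

def transpose (X : DefSet L M 2) : DefSet L M 2 :=
  ⟨{v | v ∘ Equiv.swap 0 1 ∈ X.1}, X.2.preimage_comp _⟩

lemma mem_transpose {X : DefSet L M 2} {v : Fin 2 → M} :
    v ∈ X.transpose.1 ↔ ![v 1, v 0] ∈ X.1 := by
  have : v ∘ Equiv.swap 0 1 = ![v 1, v 0] := by ext i; fin_cases i <;> rfl
  rw [transpose, Set.mem_ofPred_eq, this]

def singleton (a : M) : DefSet L M 1 :=
  ⟨{fun _ => a}, by
    have h : {fun _ => a} = {x : Fin 1 → M | x 0 ∈ ({a} : Set M)} := by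
      ext x
      simp only [mem_singleton_iff, Set.mem_ofPred_eq]
      exact ⟨fun h => h ▸ rfl, fun h => h ▸ (fin_one_eta x).symm⟩
    exact h ▸ Set.Definable.singleton_of_mem L (mem_univ a)⟩

end DefSet

end Definability

namespace IsDimFun

variable {L : FirstOrder.Language.{v, w}} {M : Type u} [L.Structure M]
  {d : ∀ n : ℕ, DefSet L M (n + 1) → WithBot ℕ}

lemma dim_mono (hd : IsDimFun d) {n : ℕ} {X Y : DefSet L M (n + 1)} (h : X.1 ⊆ Y.1) :
    d n X ≤ d n Y := by
  rw [hd.2.1 n X Y Y (union_eq_self_of_subset_left h).symm]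
  exact le_max_left _ _

lemma dim_le_one (hd : IsDimFun d) (X : DefSet L M 1) : d 0 X ≤ 1 :=
  (hd.dim_mono (Y := ⟨univ, definable_univ⟩) (subset_univ _)).trans_eq (hd.1.2.2 _ rfl)

lemma dim_singleton (hd : IsDimFun d) (a : M) : d 0 (DefSet.singleton a) = 0 :=
  hd.1.2.1 _ a rfl

lemma zero_le_dim (hd : IsDimFun d) {X : DefSet L M 1} (h : X.1.Nonempty) : 0 ≤ d 0 X := by
  obtain ⟨x, hx⟩ := h
  rw [← hd.dim_singleton (x 0)]
  refine hd.dim_mono ?_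
  rintro _ rfl
  rwa [fin_one_eta]

lemma dim_le_zero_of_finite (hd : IsDimFun d) {X : DefSet L M 1} (h : X.1.Finite) :
    d 0 X ≤ 0 := by
  suffices ∀ S : Set (Fin 1 → M), S.Finite → ∀ X : DefSet L M 1, X.1 = S → d 0 X ≤ 0 from
    this _ h X rfl
  intro S hS
  induction S, hS using Set.Finite.induction_on with
  | empty => exact fun X hX => (hd.1.1 X hX).trans_le bot_le
  | @insert a S ha _ ih =>
    intro X hX
    let A : DefSet L M 1 := DefSet.singleton (a 0)
    have hA : A.1 = {a} := by simp only [A, DefSet.singleton, fin_one_eta]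
    let Y : DefSet L M 1 := ⟨X.1 \ A.1, X.2.sdiff A.2⟩
    have hXY : X.1 = A.1 ∪ Y.1 := by
      rw [union_sdiff_self, hA, hX, union_eq_right.2 (singleton_subset_iff.2 (mem_insert _ _))]
    have hY : Y.1 = S := by show X.1 \ A.1 = S; rw [hA, hX, insert_sdiff_self_of_notMem ha]
    rw [hd.2.1 0 A Y X hXY, hd.dim_singleton]
    exact max_le le_rfl (ih Y hY)

lemma dim_eq_zero_of_finite (hd : IsDimFun d) {X : DefSet L M 1} (hfin : X.1.Finite)
    (hne : X.1.Nonempty) : d 0 X = 0 :=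
  le_antisymm (hd.dim_le_zero_of_finite hfin) (hd.zero_le_dim hne)

lemma dim_eq_one_of_finite_compl (hd : IsDimFun d) {X : DefSet L M 1} (h : X.1ᶜ.Finite) :
    d 0 X = 1 := by
  have hmax := hd.2.1 0 X ⟨X.1ᶜ, X.2.compl⟩ ⟨univ, definable_univ⟩ (union_compl_self _).symm
  rw [hd.1.2.2 _ rfl] at hmax
  rcases max_choice (d 0 X) (d 0 ⟨X.1ᶜ, X.2.compl⟩) with h' | h'
  · rw [← h', hmax]
  · have := hd.dim_le_zero_of_finite (X := ⟨X.1ᶜ, X.2.compl⟩) h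
    rw [← h', ← hmax] at this
    exact absurd this (by decide)

lemma dim_transpose (hd : IsDimFun d) (X : DefSet L M 2) : d 1 X.transpose = d 1 X :=
  hd.2.2.1 1 _ X _ rfl

lemma exists_dim_eq_add (hd : IsDimFun d) {n : ℕ} (X : DefSet L M (n + 2)) (i : Fin 2)
    (hX : ∀ v ∈ X.1, d 0 (X.fiber (v ∘ Fin.castSucc)) = (i : ℕ)) :
    ∃ S : DefSet L M (n + 1), S.1 = {x | d 0 (X.fiber x) = (i : ℕ)} ∧
      d (n + 1) X = d n S + (i : ℕ) := by
  obtain ⟨S, W, hS, hW, hdW⟩ := hd.2.2.2 n X i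
  have hWX : W = X := Subtype.ext (hW.trans (inter_eq_left.2 fun v hv => by
    rw [Set.mem_preimage, hS]
    exact ⟨_, hX v hv⟩))
  exact ⟨S, hS.trans (Set.ext fun x => ⟨fun ⟨_, h⟩ => h, fun h => ⟨_, h⟩⟩), hWX ▸ hdW⟩

lemma dim_eq_add_of_fibers (hd : IsDimFun d) {n : ℕ} (X : DefSet L M (n + 2))
    (S : DefSet L M (n + 1)) (i : Fin 2) (hS : ∀ x ∈ S.1, d 0 (X.fiber x) = (i : ℕ))
    (hSc : ∀ x ∉ S.1, fiber X.1 x = ∅) : d (n + 1) X = d n S + (i : ℕ) := by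
  have hmem : ∀ x, d 0 (X.fiber x) = (i : ℕ) ↔ x ∈ S.1 := fun x => by
    refine ⟨fun hx => ?_, hS x⟩
    by_contra hxS
    exact WithBot.bot_ne_coe ((hd.1.1 (X.fiber x) (hSc x hxS)).symm.trans hx)
  obtain ⟨S', hS', hdX⟩ := hd.exists_dim_eq_add X i fun v hv => (hmem _).2 (by
    by_contra hvS
    exact (nonempty_fiber_of_mem hv).ne_empty (hSc _ hvS))
  rwa [show S' = S from Subtype.ext (hS'.trans (Set.ext hmem))] at hdX

lemma dim_le_one_of_finite_fibers (hd : IsDimFun d) (X : DefSet L M 2)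
    (h : ∀ x, (fiber X.1 x).Finite) : d 1 X ≤ 1 := by
  obtain ⟨S, -, hdX⟩ := hd.exists_dim_eq_add X 0 fun v hv =>
    hd.dim_eq_zero_of_finite (h _) (nonempty_fiber_of_mem hv)
  simpa [hdX] using hd.dim_le_one S

lemma dim_eq_of_isGraph (hd : IsDimFun d) (G : DefSet L M 2) (A : DefSet L M 1)
    (hG : ∀ v ∈ G.1, v 0 ∈ asSet1 A.1) (hA : ∀ x ∈ asSet1 A.1, ∃! y, ![x, y] ∈ G.1) :
    d 1 G = d 0 A := by
  refine (hd.dim_eq_add_of_fibers G A 0 (fun x hx => ?_) fun x hx => ?_).trans (add_zero _)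
  · obtain ⟨y, hy, huniq⟩ := hA (x 0) (apply_zero_mem_asSet1.2 hx)
    refine hd.1.2.1 _ y (Set.ext fun z => ?_)
    rw [DefSet.fiber, mem_fiber_two, mem_singleton_iff]
    refine ⟨fun hz => ?_, ?_⟩
    · rw [← fin_one_eta z, huniq _ hz]
    · rintro rfl
      exact hy
  · refine eq_empty_of_forall_notMem fun z hz => hx ?_
    simpa using hG _ (mem_fiber_two.1 hz)

lemma dim_eq_of_isDefBijectionGraph (hd : IsDimFun d) {G : DefSet L M 2} {A B : DefSet L M 1}
    (hG : IsDefBijectionGraph G.1 (asSet1 A.1) (asSet1 B.1)) : d 0 A = d 0 B := by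
  obtain ⟨hmem, hA, hB⟩ := hG
  calc d 0 A = d 1 G := (hd.dim_eq_of_isGraph G A (fun v hv => (hmem v hv).1) hA).symm
    _ = d 1 G.transpose := (hd.dim_transpose G).symm
    _ = d 0 B := hd.dim_eq_of_isGraph G.transpose B
        (fun v hv => (hmem _ (DefSet.mem_transpose.1 hv)).2)
        (fun y hy => by simpa [DefSet.mem_transpose] using hB y hy)

lemma false_of_finite_predecessors (hd : IsDimFun d) (r : M → M → Prop)
    (hr : (univ : Set M).Definable L {v : Fin 2 → M | r (v 0) (v 1)})
    (S : DefSet L M 1) (hS : d 0 S = 1)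
    (hpred : ∀ a ∈ asSet1 S.1, {b ∈ asSet1 S.1 | r b a}.Finite)
    (hsucc : ∀ a ∈ asSet1 S.1, ∀ J : DefSet L M 1,
      asSet1 J.1 = {b ∈ asSet1 S.1 | r a b} → d 0 J = 1) : False := by
  have hr' : (univ : Set M).Definable L {v : Fin 2 → M | r (v 1) (v 0)} := by
    simpa using hr.preimage_comp ![1, 0]
  let X : DefSet L M 2 := ⟨{v | v 0 ∈ asSet1 S.1 ∧ v 1 ∈ asSet1 S.1 ∧ r (v 1) (v 0)},
    (S.definable_apply_mem 0).inter ((S.definable_apply_mem 1).inter hr')⟩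
  have hX : d 1 X ≤ 1 := hd.dim_le_one_of_finite_fibers X fun x => by
    by_cases hx : x 0 ∈ asSet1 S.1
    · exact (finite_setOf_apply_zero_mem (hpred _ hx)).subset fun y hy => by
        simp_all [X]
    · exact finite_empty.subset fun y hy => by simp_all [X]
  have hXt : d 1 X.transpose = 1 + 1 := by
    refine (hd.dim_eq_add_of_fibers X.transpose S 1 (fun x hx => ?_) fun x hx => ?_).trans ?_
    · refine hsucc (x 0) (apply_zero_mem_asSet1.2 hx) _ (Set.ext fun b => ?_)
      simp [DefSet.fiber, mem_asSet1, DefSet.mem_transpose, X, fin_one_eta, hx]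
    · refine eq_empty_of_forall_notMem fun y hy => hx ?_
      simp_all [DefSet.mem_transpose, X]
    · rw [hS]; rfl
  rw [hd.dim_transpose] at hXt
  exact absurd (hXt ▸ hX) (by decide)

end IsDimFun

section Order

variable {L : FirstOrder.Language.{v, w}} {M : Type u} [L.Structure M] [L.IsOrdered]
  [Preorder M] [L.OrderedStructure M]

lemma definable_setOf_lt {α : Type*} {A : Set M} {f g : (α → M) → M}
    (hf : A.DefinableFun L f) (hg : A.DefinableFun L g) :
    A.Definable L {v | f v < g v} := by
  have hlt : A.Definable L {v : Fin 2 → M | v 0 < v 1} := by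
    refine Set.Definable.mono (Set.empty_definable_iff.2 ⟨Term.lt (L := L) (Term.var (Sum.inl 0))
      (Term.var (Sum.inl 1)), ?_⟩) (empty_subset A)
    ext v
    simp [Formula.Realize]
  exact hlt.preimage_map (F := fun v => ![f v, g v]) (by simp [DefinableMap, *])

lemma definable_setOf_covBy {A : Set M} : A.Definable L {v : Fin 2 → M | v 0 ⋖ v 1} := by
  have hbetween : A.Definable L
      {w : Fin 2 ⊕ Fin 1 → M | ¬ (w (.inl 0) < w (.inr 0) ∧ w (.inr 0) < w (.inl 1))} :=
    ((definable_setOf_lt (DefinableFun.proj L) (DefinableFun.proj L)).inter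
      (definable_setOf_lt (DefinableFun.proj L) (DefinableFun.proj L))).compl
  convert (definable_setOf_lt (DefinableFun.proj L) (DefinableFun.proj L)).inter
    hbetween.forall_of_finite using 1
  ext v
  simp only [CovBy, Set.mem_ofPred_eq, Set.mem_inter_iff, Sum.elim_inl, Sum.elim_inr, not_and]
  exact and_congr_right' ⟨fun h u => @h (u 0), fun h c => h fun _ => c⟩

namespace DefSet

def Ioi (a : M) : DefSet L M 1 :=
  ⟨{x | a < x 0}, definable_setOf_lt (L.definableFun_const _ (mem_univ a)) (DefinableFun.proj L)⟩

def Iio (a : M) : DefSet L M 1 :=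
  ⟨{x | x 0 < a}, definable_setOf_lt (DefinableFun.proj L) (L.definableFun_const _ (mem_univ a))⟩

end DefSet

end Order

namespace IsDimFun

variable {L : FirstOrder.Language.{v, w}} {M : Type u} [L.Structure M] [L.IsOrdered]
  [LinearOrder M] [L.OrderedStructure M] {d : ∀ n : ℕ, DefSet L M (n + 1) → WithBot ℕ}

lemma dim_Iio_eq_one_or_dim_Ioi_eq_one (hd : IsDimFun d) (a : M) :
    d 0 (DefSet.Iio a) = 1 ∨ d 0 (DefSet.Ioi a) = 1 := by
  let P : DefSet L M 1 := ⟨_, (DefSet.singleton a).2.union (DefSet.Ioi a).2⟩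
  have hsplit : (univ : Set (Fin 1 → M)) = (DefSet.Iio (L := L) a).1 ∪ P.1 := by
    refine (eq_univ_of_forall fun x => ?_).symm
    rcases lt_trichotomy (x 0) a with h | h | h
    · exact Or.inl h
    · exact Or.inr (Or.inl (by rw [← h]; exact (fin_one_eta x).symm))
    · exact Or.inr (Or.inr h)
  have hmax := hd.2.1 0 _ P ⟨univ, definable_univ⟩ hsplit
  rw [hd.1.2.2 _ rfl, hd.2.1 0 _ _ P rfl, hd.dim_singleton] at hmax
  rcases max_choice (d 0 (DefSet.Iio a)) (max 0 (d 0 (DefSet.Ioi a))) with h | h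
  · exact Or.inl (h ▸ hmax).symm
  · rcases max_choice 0 (d 0 (DefSet.Ioi a)) with h' | h'
    · exact absurd (h' ▸ h ▸ hmax) (by decide)
    · exact Or.inr (h' ▸ h ▸ hmax).symm

end IsDimFun

theorem not_isDimFun_nat {L : FirstOrder.Language.{v, w}} [L.IsOrdered] [L.Structure ℕ]
    [L.OrderedStructure ℕ] (d : ∀ n : ℕ, DefSet L ℕ (n + 1) → WithBot ℕ) : ¬ IsDimFun d := fun hd =>
  hd.false_of_finite_predecessors (· < ·)
    (definable_setOf_lt (DefinableFun.proj L) (DefinableFun.proj L))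
    ⟨univ, definable_univ⟩ (hd.1.2.2 _ rfl)
    (fun a _ => (finite_Iio a).subset fun _ hb => hb.2)
    fun a _ J hJ => hd.dim_eq_one_of_finite_compl <|
      (finite_setOf_apply_zero_mem (finite_Iic a)).subset fun y hy => by
        have : y 0 ∉ asSet1 J.1 := apply_zero_mem_asSet1.not.2 hy
        simpa [hJ] using this

section Integers

variable {L : FirstOrder.Language.{v, w}} [L.IsOrdered] [L.Structure ℤ] [L.OrderedStructure ℤ]
  {d : ∀ n : ℕ, DefSet L ℤ (n + 1) → WithBot ℕ}

lemma IsDimFun.dim_eq_of_add_one (hd : IsDimFun d) {A B : DefSet L ℤ 1}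
    (hAB : ∀ b, b ∈ asSet1 B.1 ↔ b - 1 ∈ asSet1 A.1) : d 0 A = d 0 B := by
  refine hd.dim_eq_of_isDefBijectionGraph (G := ⟨{v | v 0 ∈ asSet1 A.1 ∧ v 0 ⋖ v 1},
    (A.definable_apply_mem 0).inter definable_setOf_covBy⟩) ⟨?_, fun a ha => ?_, fun b hb => ?_⟩
  · rintro v ⟨hv, hcov⟩
    rw [Order.covBy_iff_add_one_eq] at hcov
    exact ⟨hv, (hAB _).2 (by rwa [← hcov, add_sub_cancel_right])⟩
  · refine ⟨a + 1, ?_, ?_⟩ <;> simp_all [Order.covBy_iff_add_one_eq]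
  · refine ⟨b - 1, ?_, ?_⟩
    · simp_all [Order.covBy_iff_add_one_eq]
    · rintro y ⟨-, hy⟩
      simp only [Matrix.cons_val_zero, Matrix.cons_val_one, Order.covBy_iff_add_one_eq] at hy
      omega

lemma IsDimFun.dim_Ioi_eq_dim_Ioi_zero (hd : IsDimFun d) (c : ℤ) :
    d 0 (DefSet.Ioi c) = d 0 (DefSet.Ioi 0) := by
  have hper : Function.Periodic (fun c : ℤ => d 0 (DefSet.Ioi c)) 1 := fun c =>
    (hd.dim_eq_of_add_one fun b => by simp [DefSet.Ioi, mem_asSet1]; omega).symm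
  simpa using hper.int_mul_eq c

lemma IsDimFun.dim_Iio_eq_dim_Iio_zero (hd : IsDimFun d) (c : ℤ) :
    d 0 (DefSet.Iio c) = d 0 (DefSet.Iio 0) := by
  have hper : Function.Periodic (fun c : ℤ => d 0 (DefSet.Iio c)) 1 := fun c =>
    (hd.dim_eq_of_add_one fun b => by simp [DefSet.Iio, mem_asSet1]).symm
  simpa using hper.int_mul_eq c

theorem not_isDimFun_int (d : ∀ n : ℕ, DefSet L ℤ (n + 1) → WithBot ℕ) : ¬ IsDimFun d := by
  intro hd
  rcases hd.dim_Iio_eq_one_or_dim_Ioi_eq_one (0 : ℤ) with h | h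
  · refine hd.false_of_finite_predecessors (fun a b => b < a)
      (definable_setOf_lt (DefinableFun.proj L) (DefinableFun.proj L)) _ h
      (fun a _ => (finite_Ioo a 0).subset fun b hb => ⟨hb.2, hb.1⟩) fun a ha J hJ => ?_
    rw [← h, ← hd.dim_Iio_eq_dim_Iio_zero a]
    refine congrArg (d 0) (DefSet.ext_asSet1 (hJ.trans (Set.ext fun b => ?_)))
    simp only [DefSet.Iio, mem_asSet1, Set.mem_ofPred_eq] at ha ⊢
    omega
  · refine hd.false_of_finite_predecessors (· < ·)
      (definable_setOf_lt (DefinableFun.proj L) (DefinableFun.proj L)) _ h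
      (fun a _ => (finite_Ioo 0 a).subset fun b hb => hb) fun a ha J hJ => ?_
    rw [← h, ← hd.dim_Ioi_eq_dim_Ioi_zero a]
    refine congrArg (d 0) (DefSet.ext_asSet1 (hJ.trans (Set.ext fun b => ?_)))
    simp only [DefSet.Ioi, mem_asSet1, Set.mem_ofPred_eq] at ha ⊢
    omega

end Integers

lemma nDim_eq_zero {L : FirstOrder.Language.{v, w}} {M : Type u} [L.Structure M]
    (h : ∀ d, ¬ IsDimFun (L := L) (M := M) d) : nDim L M = 0 :=
  Cardinal.mk_eq_zero_iff.2 ⟨fun d => h d.1 d.2⟩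

instance orderedStructure_orderStructure (M : Type u) [LE M] :
    @Language.order.OrderedStructure M _ _ (Language.orderStructure M) :=
  @OrderedStructure.mk _ _ _ _ (Language.orderStructure M) fun _ => Iff.rfl

/-- The structures `(ℕ, <)` and `(ℤ, <)` admit no dimension function. -/
theorem statement_6 :
    @nDim Language.order ℕ (Language.orderStructure ℕ) = 0 ∧
    @nDim Language.order ℤ (Language.orderStructure ℤ) = 0 :=
  letI := Language.orderStructure ℕ
  letI := Language.orderStructure ℤ
  ⟨nDim_eq_zero not_isDimFun_nat, nDim_eq_zero not_isDimFun_int⟩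

end PaperDim
end

section
/- Let 𝓜 = (M,<,+,0,…) be a definably complete expansion of an ordered group and dim : Def(𝓜) → ℕ ∪ {−∞} a dimension function. Then dim X = 1 for every definable subset X of M having nonempty interior in the order topology. -/
open FirstOrder FirstOrder.Language Set

universe u v w

namespace PaperDim

/-!
An open set contains an interval `(a, b)`, so it suffices to show `dim (a, b) = 1`. Definable
bijections preserve dimension (apply (4) to the graph and to its transpose), so `dim` is invariant
under translations, and the reflection `x ↦ -x + 2c` gives `dim (-∞, c) = dim (c, ∞)`, whence
`dim (c, ∞) = 1`. Suppose `dim (a, b) = 0`. By (4) the set of `m` with `dim (a, m) = 0` is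
definable; it is closed under `m ↦ (b - a) + m` by translation invariance, so by definable
completeness it is unbounded, and then `dim (a, m) = 0` for all `m > a`. Now
`Z = {(x, y) | a < y < x}` has dimension `dim (a, ∞) + 0 = 1` by (4) over the first coordinate,
while its transpose has dimension `dim (a, ∞) + 1 = 2`, contradicting (3).
-/

section Definability

variable {L : FirstOrder.Language.{v, w}} {M : Type u} [L.Structure M]

theorem definable_preimage_sumElim {m n : ℕ} {S : Set (Fin m → M)}
    (hS : (univ : Set M).Definable L S) (f : Fin m → M ⊕ Fin n) :
    (univ : Set M).Definable L {v : Fin n → M | (fun i => Sum.elim id v (f i)) ∈ S} := by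
  obtain ⟨φ, hφ⟩ := hS
  let τ : M ⊕ Fin n → L[[univ]].Term (Fin n) :=
    Sum.elim (fun a => (L.con (⟨a, mem_univ a⟩ : (univ : Set M))).term) Term.var
  refine ⟨φ.subst (τ ∘ f), Set.ext fun v => ?_⟩
  have hτ : (fun i => (τ (f i)).realize v) = fun i => Sum.elim id v (f i) := by
    funext i
    cases f i <;> simp [τ]
  simp only [hφ, mem_ofPred_eq, Formula.Realize, BoundedFormula.realize_subst, Function.comp_apply,
    hτ]

variable {n : ℕ}

theorem definable_lt [LT M] (hlt : LtDefinable L M) (s t : M ⊕ Fin n) :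
    (univ : Set M).Definable L {v : Fin n → M | Sum.elim id v s < Sum.elim id v t} :=
  definable_preimage_sumElim hlt ![s, t]

theorem definable_add_eq [Add M] (hadd : AddDefinable L M) (s t r : M ⊕ Fin n) :
    (univ : Set M).Definable L
      {v : Fin n → M | Sum.elim id v s + Sum.elim id v t = Sum.elim id v r} :=
  definable_preimage_sumElim hadd ![s, t, r]

end Definability

section Coordinates

variable {L : FirstOrder.Language.{v, w}} {M : Type u} [L.Structure M]

theorem mem_iff_mem_asSet1 {X : Set (Fin 1 → M)} {v : Fin 1 → M} :
    v ∈ X ↔ v 0 ∈ asSet1 X := by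
  have hv : (fun _ => v 0) = v := funext fun i => by rw [Subsingleton.elim i 0]
  rw [asSet1, mem_ofPred_eq, hv]

theorem eq_of_asSet1_eq {X Y : Set (Fin 1 → M)} (h : asSet1 X = asSet1 Y) : X = Y :=
  Set.ext fun _ => by rw [mem_iff_mem_asSet1, h, ← mem_iff_mem_asSet1]

theorem asSet1_singleton (a : M) : asSet1 ({fun _ => a} : Set (Fin 1 → M)) = {a} :=
  Set.ext fun b => ⟨fun h => congrFun h 0, fun h => by rw [mem_singleton_iff.1 h]; rfl⟩

theorem vec_two_eta (v : Fin 2 → M) : ![v 0, v 1] = v := by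
  ext i; fin_cases i <;> rfl

theorem asSet1_fiber (G : Set (Fin 2 → M)) (x : Fin 1 → M) :
    asSet1 (fiber G x) = {y | ![x 0, y] ∈ G} := by
  have hsnoc (y : M) : (Fin.snoc x y : Fin 2 → M) = ![x 0, y] := by
    ext i; fin_cases i <;> rfl
  ext y
  simp only [asSet1, fiber, mem_ofPred_eq, hsnoc]

def defSet₁ (S : Set M) (hS : (univ : Set M).Definable₁ L S) : DefSet L M 1 :=
  ⟨{v | v 0 ∈ S}, hS⟩

def defSingleton (a : M) : DefSet L M 1 :=
  defSet₁ {a} (Definable.singleton_of_mem L (mem_univ a))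

def swapCoords (G : DefSet L M 2) : DefSet L M 2 :=
  ⟨(fun v => v ∘ Equiv.swap 0 1) ⁻¹' G.1, G.2.preimage_comp _⟩

theorem mem_swapCoords {G : DefSet L M 2} {x y : M} :
    ![x, y] ∈ (swapCoords G).1 ↔ ![y, x] ∈ G.1 := by
  have hswap : (![x, y] : Fin 2 → M) ∘ Equiv.swap 0 1 = ![y, x] := by
    ext i; fin_cases i <;> rfl
  rw [swapCoords, mem_preimage, hswap]

end Coordinates

section DimensionAxioms

variable {L : FirstOrder.Language.{v, w}} {M : Type u} [L.Structure M]
  {d : ∀ n : ℕ, DefSet L M (n + 1) → WithBot ℕ}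

theorem dim_mono (h2 : Cond2 d 0) {X Y : DefSet L M 1} (h : asSet1 X.1 ⊆ asSet1 Y.1) :
    d 0 X ≤ d 0 Y := by
  have hXY : X.1 ∪ Y.1 = Y.1 :=
    union_eq_self_of_subset_left fun v hv => mem_iff_mem_asSet1.2 (h (mem_iff_mem_asSet1.1 hv))
  rw [h2 X Y Y hXY.symm]
  exact le_max_left _ _

theorem dim_singleton (h1 : Cond1 d) (a : M) : d 0 (defSingleton a) = 0 :=
  h1.2.1 _ a (eq_of_asSet1_eq (asSet1_singleton a).symm)

theorem dim_le_one (h1 : Cond1 d) (h2 : Cond2 d 0) (X : DefSet L M 1) : d 0 X ≤ 1 :=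
  (dim_mono h2 (Y := ⟨univ, definable_univ⟩) (subset_univ _)).trans_eq (h1.2.2 _ rfl)

theorem zero_le_dim (h1 : Cond1 d) (h2 : Cond2 d 0) (X : DefSet L M 1)
    (hX : (asSet1 X.1).Nonempty) : 0 ≤ d 0 X := by
  obtain ⟨a, ha⟩ := hX
  rw [← dim_singleton h1 a]
  exact dim_mono h2 (singleton_subset_iff.2 ha)

theorem dim_eq_zero_or_one (h1 : Cond1 d) (h2 : Cond2 d 0) (X : DefSet L M 1)
    (hX : (asSet1 X.1).Nonempty) : d 0 X = 0 ∨ d 0 X = 1 := by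
  have h0 := zero_le_dim h1 h2 X hX
  have hle := dim_le_one h1 h2 X
  generalize d 0 X = t at h0 hle ⊢
  induction t using WithBot.recBotCoe with
  | bot => exact absurd h0 (by simp)
  | coe k =>
    have hk : k ≤ 1 := WithBot.coe_le_one.1 hle
    interval_cases k <;> simp

theorem mem_asSet1_iff_dim_fiber {G : DefSet L M 2} {i : Fin 2} {S : DefSet L M 1}
    (hS : S.1 = {x | ∃ hf : (univ : Set M).Definable L (fiber G.1 x),
      d 0 ⟨fiber G.1 x, hf⟩ = ((i : ℕ) : WithBot ℕ)})
    {x : M} {F : DefSet L M 1} (hF : asSet1 F.1 = {y | ![x, y] ∈ G.1}) :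
    x ∈ asSet1 S.1 ↔ d 0 F = ((i : ℕ) : WithBot ℕ) := by
  obtain ⟨F, hFdef⟩ := F
  obtain rfl : F = fiber G.1 (fun _ => x) := eq_of_asSet1_eq (by rw [hF, asSet1_fiber])
  rw [asSet1, mem_ofPred_eq, hS, mem_ofPred_eq]
  exact ⟨fun ⟨_, hd⟩ => hd, fun hd => ⟨hFdef, hd⟩⟩

theorem dim_eq_add_of_fibers (h1 : Cond1 d) (h4 : Cond4 d 0) (G : DefSet L M 2)
    (A : DefSet L M 1) (i : Fin 2)
    (hfib : ∀ x ∈ asSet1 A.1, ∃ F : DefSet L M 1,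
      asSet1 F.1 = {y | ![x, y] ∈ G.1} ∧ d 0 F = ((i : ℕ) : WithBot ℕ))
    (hout : ∀ x ∉ asSet1 A.1, ∀ y, ![x, y] ∉ G.1) :
    d 1 G = d 0 A + ((i : ℕ) : WithBot ℕ) := by
  obtain ⟨S, W, hS, hW, hdim⟩ := h4 G i
  have hSA : S = A := by
    refine Subtype.ext (eq_of_asSet1_eq (Set.ext fun x => ?_))
    by_cases hx : x ∈ asSet1 A.1
    · obtain ⟨F, hF, hd⟩ := hfib x hx
      exact iff_of_true ((mem_asSet1_iff_dim_fiber hS hF).2 hd) hx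
    · have hF : asSet1 (∅ : Set (Fin 1 → M)) = {y | ![x, y] ∈ G.1} :=
        (eq_empty_of_forall_notMem (hout x hx)).symm
      rw [mem_asSet1_iff_dim_fiber hS (F := ⟨∅, definable_empty⟩) hF, h1.1 _ rfl]
      exact iff_of_false WithBot.bot_ne_coe hx
  have hWG : W = G := by
    refine Subtype.ext (hW.trans (inter_eq_left.2 fun v hv => ?_))
    rw [mem_preimage, hSA, mem_iff_mem_asSet1]
    by_contra hv0
    exact hout _ hv0 (v 1) (by rw [← vec_two_eta v] at hv; exact hv)
  subst hSA hWG
  exact hdim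

theorem nonempty_of_dim_ne_bot (h1 : Cond1 d) {X : DefSet L M 1} (hX : d 0 X ≠ ⊥) :
    (asSet1 X.1).Nonempty :=
  nonempty_iff_ne_empty.2 fun hempty => hX (h1.1 X (eq_of_asSet1_eq hempty))

theorem dim_swapCoords (h3 : Cond3 d 1) (G : DefSet L M 2) : d 1 (swapCoords G) = d 1 G :=
  h3 _ G _ rfl

theorem dim_graph (h1 : Cond1 d) (h4 : Cond4 d 0) (G : DefSet L M 2) (A : DefSet L M 1)
    (hunique : ∀ x ∈ asSet1 A.1, ∃! y, ![x, y] ∈ G.1)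
    (hdom : ∀ v ∈ G.1, v 0 ∈ asSet1 A.1) :
    d 1 G = d 0 A := by
  have hfib (x : M) (hx : x ∈ asSet1 A.1) : ∃ F : DefSet L M 1,
      asSet1 F.1 = {y | ![x, y] ∈ G.1} ∧ d 0 F = (((0 : Fin 2) : ℕ) : WithBot ℕ) := by
    obtain ⟨y, hy, huniq⟩ := hunique x hx
    refine ⟨defSingleton y,
      Set.ext fun z => ⟨fun hz => (mem_singleton_iff.1 hz) ▸ hy, huniq z⟩, ?_⟩
    simpa using dim_singleton h1 y
  simpa using dim_eq_add_of_fibers h1 h4 G A 0 hfib fun x hx y hy => hx (hdom _ hy)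

theorem dim_eq_of_isDefBijectionGraph (h1 : Cond1 d) (h3 : Cond3 d 1) (h4 : Cond4 d 0)
    {G : DefSet L M 2} {A B : DefSet L M 1}
    (hG : IsDefBijectionGraph G.1 (asSet1 A.1) (asSet1 B.1)) : d 0 A = d 0 B :=
  calc d 0 A = d 1 G := (dim_graph h1 h4 G A hG.2.1 fun v hv => (hG.1 v hv).1).symm
    _ = d 1 (swapCoords G) := (dim_swapCoords h3 G).symm
    _ = d 0 B := dim_graph h1 h4 _ B (fun y hy => by simpa only [mem_swapCoords] using hG.2.2 y hy)
      fun v hv => (hG.1 _ hv).2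

end DimensionAxioms

section OrderedGroup

variable {M : Type u} [LinearOrder M] [AddGroup M] [AddRightStrictMono M]

theorem isDefBijectionGraph_add_right (p q c : M) :
    IsDefBijectionGraph {v : Fin 2 → M | v 0 ∈ Ioo p q ∧ v 0 + c = v 1}
      (Ioo p q) (Ioo (p + c) (q + c)) :=
  ⟨fun _ ⟨hv, hvc⟩ =>
      ⟨hv, hvc ▸ ⟨(add_lt_add_iff_right c).2 hv.1, (add_lt_add_iff_right c).2 hv.2⟩⟩,
    fun x hx => ⟨x + c, ⟨hx, rfl⟩, fun _ ⟨_, hy⟩ => hy.symm⟩,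
    fun y hy =>
      ⟨y - c, ⟨⟨lt_sub_iff_add_lt.2 hy.1, sub_lt_iff_lt_add.2 hy.2⟩, sub_add_cancel y c⟩,
      fun _ ⟨_, hx⟩ => eq_sub_of_add_eq hx⟩⟩

variable [AddLeftStrictMono M]

theorem not_isLUB_of_forall_add_mem {S : Set M} {s t : M} (ht : 0 < t)
    (hS : ∀ m ∈ S, t + m ∈ S) : ¬ IsLUB S s := by
  intro hs
  have hlt : -t + s < s := neg_add_lt_iff_lt_add.2 (lt_add_of_pos_left s ht)
  obtain ⟨m, hm, hsm⟩ : ∃ m ∈ S, -t + s < m := by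
    by_contra! h
    exact hlt.not_ge (hs.2 h)
  exact (neg_add_lt_iff_lt_add.1 hsm).not_ge (hs.1 (hS m hm))

theorem isDefBijectionGraph_reflect (c : M) :
    IsDefBijectionGraph {v : Fin 2 → M | v 0 + v 1 = c + c ∧ c < v 0} (Ioi c) (Iio c) := by
  refine ⟨fun v ⟨hsum, hc⟩ => ⟨hc, ?_⟩,
    fun x hx => ⟨-x + (c + c), ⟨add_neg_cancel_left _ _, hx⟩,
      fun y ⟨hy, _⟩ => eq_neg_add_of_add_eq hy⟩,
    fun y hy =>
      ⟨c + c - y, ⟨sub_add_cancel _ _, ?_⟩, fun x ⟨hx, _⟩ => eq_sub_of_add_eq hx⟩⟩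
  · rw [mem_Iio, eq_neg_add_of_add_eq hsum, neg_add_lt_iff_lt_add]
    exact (add_lt_add_iff_right c).2 hc
  · exact lt_sub_iff_add_lt.2 ((add_lt_add_iff_left c).2 hy)

end OrderedGroup

section OrderTopology

variable {M : Type u} [LinearOrder M] [NoMinOrder M] [NoMaxOrder M]

theorem exists_Ioo_subset_of_nonempty_interior {S : Set M}
    (h : (@interior M (orderTop M) S).Nonempty) : ∃ a b, a < b ∧ Ioo a b ⊆ S := by
  let _ := orderTop M
  have : OrderTopology M :=
    ⟨show orderTop M = _ from
      congrArg TopologicalSpace.generateFrom (Set.ext fun _ => exists_or.symm)⟩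
  obtain ⟨x, hx⟩ := h
  obtain ⟨a, b, ⟨hax, hxb⟩, hsub⟩ :=
    mem_nhds_iff_exists_Ioo_subset.1 (mem_interior_iff_mem_nhds.1 hx)
  exact ⟨a, b, hax.trans hxb, hsub⟩

end OrderTopology

section Intervals

variable {L : FirstOrder.Language.{v, w}} {M : Type u} [L.Structure M] [LinearOrder M]

def defIoi (hlt : LtDefinable L M) (c : M) : DefSet L M 1 :=
  defSet₁ (Ioi c) (definable_lt hlt (.inl c) (.inr 0))

def defIio (hlt : LtDefinable L M) (c : M) : DefSet L M 1 :=
  defSet₁ (Iio c) (definable_lt hlt (.inr 0) (.inl c))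

def defIoo (hlt : LtDefinable L M) (p q : M) : DefSet L M 1 :=
  defSet₁ (Ioo p q)
    ((definable_lt hlt (.inl p) (.inr 0)).inter (definable_lt hlt (.inr 0) (.inl q)))

def defTriangle (hlt : LtDefinable L M) (a : M) : DefSet L M 2 :=
  ⟨{v | v 1 ∈ Ioo a (v 0)},
    (definable_lt hlt (.inl a) (.inr 1)).inter (definable_lt hlt (.inr 1) (.inr 0))⟩

variable {d : ∀ n : ℕ, DefSet L M (n + 1) → WithBot ℕ}

theorem dim_Ioo_eq_max [DenselyOrdered M] (h1 : Cond1 d) (h2 : Cond2 d 0)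
    (hlt : LtDefinable L M) {p m q : M} (hpm : p < m) (hmq : m < q) :
    d 0 (defIoo hlt p q) = max (d 0 (defIoo hlt p m)) (d 0 (defIoo hlt m q)) := by
  let right : DefSet L M 1 :=
    defSet₁ ({m} ∪ Ioo m q) ((defSingleton m).2.union (defIoo hlt m q).2)
  have hsplit : Ioo p q = Ioo p m ∪ ({m} ∪ Ioo m q) := by
    rw [← insert_eq, Ioo_insert_left hmq, Ioo_union_Ico_eq_Ioo hpm hmq.le]
  have hunion : (defIoo hlt p q).1 = (defIoo hlt p m).1 ∪ right.1 :=
    Set.ext fun v => show v 0 ∈ Ioo p q ↔ v 0 ∈ Ioo p m ∪ ({m} ∪ Ioo m q) by rw [hsplit]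
  rw [h2 _ _ _ hunion, h2 (defSingleton m) (defIoo hlt m q) right rfl, dim_singleton h1,
    ← max_assoc, max_eq_left (zero_le_dim h1 h2 (defIoo hlt p m) (nonempty_Ioo.2 hpm))]

variable [AddGroup M] [AddRightStrictMono M]

theorem dim_Ioo_add_right (h1 : Cond1 d) (h3 : Cond3 d 1) (h4 : Cond4 d 0)
    (hlt : LtDefinable L M) (hadd : AddDefinable L M) (p q c : M) :
    d 0 (defIoo hlt (p + c) (q + c)) = d 0 (defIoo hlt p q) :=
  (dim_eq_of_isDefBijectionGraph h1 h3 h4 (A := defIoo hlt p q) (B := defIoo hlt (p + c) (q + c))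
    (G := ⟨{v | v 0 ∈ Ioo p q ∧ v 0 + c = v 1},
      ((definable_lt hlt (.inl p) (.inr 0)).inter (definable_lt hlt (.inr 0) (.inl q))).inter
        (definable_add_eq hadd (.inr 0) (.inl c) (.inr 1))⟩)
    (isDefBijectionGraph_add_right p q c)).symm

variable [AddLeftStrictMono M]

theorem dim_Iio_eq_dim_Ioi (h1 : Cond1 d) (h3 : Cond3 d 1) (h4 : Cond4 d 0)
    (hlt : LtDefinable L M) (hadd : AddDefinable L M) (c : M) :
    d 0 (defIio hlt c) = d 0 (defIoi hlt c) :=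
  (dim_eq_of_isDefBijectionGraph h1 h3 h4 (A := defIoi hlt c) (B := defIio hlt c)
    (G := ⟨{v | v 0 + v 1 = c + c ∧ c < v 0},
    (definable_add_eq hadd (.inr 0) (.inr 1) (.inl (c + c))).inter
      (definable_lt hlt (.inl c) (.inr 0))⟩) (isDefBijectionGraph_reflect c)).symm

theorem dim_Ioi_eq_one [NoMaxOrder M] (h1 : Cond1 d) (h2 : Cond2 d 0) (h3 : Cond3 d 1)
    (h4 : Cond4 d 0) (hlt : LtDefinable L M) (hadd : AddDefinable L M) (c : M) :
    d 0 (defIoi hlt c) = 1 := by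
  let right : DefSet L M 1 :=
    defSet₁ ({c} ∪ Ioi c) ((defSingleton c).2.union (defIoi hlt c).2)
  have hsplit := h2 (defIio hlt c) right ⟨univ, definable_univ⟩
    (Set.ext fun v => iff_of_true trivial (lt_trichotomy (v 0) c))
  rw [h1.2.2 _ rfl, h2 (defSingleton c) (defIoi hlt c) right rfl, dim_singleton h1,
    dim_Iio_eq_dim_Ioi h1 h3 h4 hlt hadd] at hsplit
  refine (dim_eq_zero_or_one h1 h2 (defIoi hlt c) nonempty_Ioi).resolve_left fun h0 => ?_
  rw [h0] at hsplit
  simp at hsplit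

theorem dim_Ioo_eq_zero_of_dim_Ioo_eq_zero [DenselyOrdered M] (hdc : DefinablyComplete L M)
    (h1 : Cond1 d) (h2 : Cond2 d 0) (h3 : Cond3 d 1) (h4 : Cond4 d 0)
    (hlt : LtDefinable L M) (hadd : AddDefinable L M) {a b : M} (hab : a < b)
    (h0 : d 0 (defIoo hlt a b) = 0) {m : M} (ham : a < m) : d 0 (defIoo hlt a m) = 0 := by
  obtain ⟨S, -, hS, -, -⟩ := h4 (defTriangle hlt a) 0
  have hmem (x : M) : x ∈ asSet1 S.1 ↔ d 0 (defIoo hlt a x) = 0 :=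
    mem_asSet1_iff_dim_fiber hS rfl
  have hgt (x : M) (hx : x ∈ asSet1 S.1) : a < x := by
    obtain ⟨y, hay, hyx⟩ :=
      nonempty_of_dim_ne_bot h1 (((hmem x).1 hx).trans_ne WithBot.zero_ne_bot)
    exact hay.trans hyx
  have hdown (x : M) (hx : x ∈ asSet1 S.1) (y : M) (hy : y ∈ Ioc a x) : y ∈ asSet1 S.1 := by
    rw [hmem] at hx ⊢
    exact le_antisymm (hx ▸ dim_mono h2 (Ioo_subset_Ioo_right hy.2))
      (zero_le_dim h1 h2 _ (nonempty_Ioo.2 hy.1))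
  have hstep (x : M) (hx : x ∈ asSet1 S.1) : b - a + x ∈ asSet1 S.1 := by
    have hax := hgt x hx
    have hxlt : x < b - a + x := lt_add_of_pos_left x (sub_pos.2 hab)
    have htrans : d 0 (defIoo hlt x (b - a + x)) = 0 := by
      have := dim_Ioo_add_right h1 h3 h4 hlt hadd a b (-a + x)
      rwa [add_neg_cancel_left, ← add_assoc, ← sub_eq_add_neg, h0] at this
    rw [hmem] at hx ⊢
    rw [dim_Ioo_eq_max h1 h2 hlt hax hxlt, hx, htrans, max_self]
  have hunbdd : ¬ BddAbove (asSet1 S.1) := fun hbdd =>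
    let ⟨_, hs⟩ := (hdc S).1 ⟨b, (hmem b).2 h0⟩ hbdd
    not_isLUB_of_forall_add_mem (sub_pos.2 hab) hstep hs
  obtain ⟨x, hx, hmx⟩ := not_bddAbove_iff.1 hunbdd m
  exact (hmem m).1 (hdown x hx m ⟨ham, hmx.le⟩)

theorem dim_Ioo_eq_one [DenselyOrdered M] [NoMaxOrder M] (hdc : DefinablyComplete L M)
    (h1 : Cond1 d) (h2 : Cond2 d 0) (h3 : Cond3 d 1) (h4 : Cond4 d 0)
    (hlt : LtDefinable L M) (hadd : AddDefinable L M) {a b : M} (hab : a < b) :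
    d 0 (defIoo hlt a b) = 1 := by
  refine (dim_eq_zero_or_one h1 h2 (defIoo hlt a b) (nonempty_Ioo.2 hab)).resolve_left
    fun h0 => ?_
  have hZ : d 1 (defTriangle hlt a) = 1 := by
    rw [dim_eq_add_of_fibers h1 h4 (defTriangle hlt a) (defIoi hlt a) 0
      (fun x hx => ⟨defIoo hlt a x, rfl, ?_⟩) fun x hx y hy => hx (hy.1.trans hy.2),
      dim_Ioi_eq_one h1 h2 h3 h4 hlt hadd]
    · simp
    · simpa using dim_Ioo_eq_zero_of_dim_Ioo_eq_zero hdc h1 h2 h3 h4 hlt hadd hab h0 hx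
  have hZswap : d 1 (swapCoords (defTriangle hlt a)) = 2 := by
    rw [dim_eq_add_of_fibers h1 h4 (swapCoords (defTriangle hlt a)) (defIoi hlt a) 1
      (fun x hx => ⟨defIoi hlt x, ?_, ?_⟩) fun x hx y hy => hx (mem_swapCoords.1 hy).1,
      dim_Ioi_eq_one h1 h2 h3 h4 hlt hadd]
    · rfl
    · ext y
      simp only [mem_swapCoords]
      exact ⟨fun hy => ⟨hx, hy⟩, And.right⟩
    · simpa using dim_Ioi_eq_one h1 h2 h3 h4 hlt hadd x
  have := dim_swapCoords h3 (defTriangle hlt a)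
  rw [hZ, hZswap] at this
  exact absurd this (by decide)

end Intervals

/-- Let `M` be a definably complete expansion of an ordered group and `dim`
a dimension function on `M`. Then `dim X = 1` for every definable subset `X` of `M` having
nonempty interior in the order topology. -/
theorem statement_13 (L : FirstOrder.Language.{v, w}) (M : Type u) [L.Structure M]
    [LinearOrder M] [DenselyOrdered M] [NoMinOrder M] [NoMaxOrder M]
    [AddGroup M] [CovariantClass M M (· + ·) (· < ·)]
    [CovariantClass M M (Function.swap (· + ·)) (· < ·)]
    (hlt : LtDefinable L M) (hadd : AddDefinable L M) (hdc : DefinablyComplete L M)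
    (d : ∀ n : ℕ, DefSet L M (n + 1) → WithBot ℕ) (hd : d ∈ DimFuns L M)
    (X : DefSet L M 1) (hint : (@interior M (orderTop M) (asSet1 X.1)).Nonempty) :
    d 0 X = 1 := by
  obtain ⟨h1, h2, h3, h4⟩ := hd
  obtain ⟨a, b, hab, hsub⟩ := exists_Ioo_subset_of_nonempty_interior hint
  refine le_antisymm (dim_le_one h1 (h2 0) X) ?_
  rw [← dim_Ioo_eq_one hdc h1 (h2 0) (h3 1) (h4 0) hlt hadd hab]
  exact dim_mono (h2 0) hsub

end PaperDim
end
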